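/- arXiv:math/0010165 — 2 statements merged into one kernel-verified Lean document; each statement's English description precedes it below -/
import Mathlib

section
/- With ξ̂(λ) = (6λ + 1 + √(24λ+1))/6 and ξ̃(1,λ) = ((√25 + √(24λ+1) − 1)² − 1)/24, one has ξ̃(1,λ) = ξ̂(ξ̂(λ)) for all λ ≥ 0. -/
/-- The one-sided rectangle exponent for chordal `SLE₆`. -/
noncomputable def xiHatSLE6 (lam : ℝ) : ℝ :=
  (6 * lam + 1 + Real.sqrt (24 * lam + 1)) / 6

/-- The cascade relation `ξ̃(1,λ) = ξ̂(SLE₆, ξ̂(SLE₆, λ))`. -/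
theorem xiTilde_one_eq_xiHat_xiHat (lam : ℝ) (hlam : 0 ≤ lam) :
    ((Real.sqrt 25 + Real.sqrt (24 * lam + 1) - 1) ^ 2 - 1) / 24 =
      xiHatSLE6 (xiHatSLE6 lam) := by
  have h25 : Real.sqrt 25 = 5 := by
    rw [show (25:ℝ) = 5 ^ 2 by norm_num, Real.sqrt_sq (by norm_num)]
  set s := Real.sqrt (24 * lam + 1) with hs
  have hsnn : 0 ≤ s := Real.sqrt_nonneg _
  have hs2 : s ^ 2 = 24 * lam + 1 := Real.sq_sqrt (by linarith)
  have hinner : Real.sqrt (24 * xiHatSLE6 lam + 1) = s + 2 := by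
    have : 24 * xiHatSLE6 lam + 1 = (s + 2) ^ 2 := by
      unfold xiHatSLE6; rw [← hs]; ring_nf; nlinarith [hs2]
    rw [this, Real.sqrt_sq (by linarith)]
  rw [show xiHatSLE6 (xiHatSLE6 lam) =
      (6 * xiHatSLE6 lam + 1 + Real.sqrt (24 * xiHatSLE6 lam + 1)) / 6 from rfl,
    hinner, h25]
  unfold xiHatSLE6
  rw [← hs]
  nlinarith [hs2]
end

section
/- The function λ ↦ ξ(j,λ) = ((√(24j+1) + √(24λ+1) − 2)² − 4)/48 is strictly increasing and strictly concave on [0,∞), for every fixed real j ≥ 1. -/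
/-- For each fixed `j ≥ 1`, the plane exponent formula `λ ↦ ξ(j,λ)` is strictly
increasing and strictly concave on `[0,∞)`. -/
theorem xiPlane_strictMono_strictConcave (j : ℝ) (hj : 1 ≤ j) :
    StrictMonoOn
        (fun lam : ℝ =>
          ((Real.sqrt (24 * j + 1) + Real.sqrt (24 * lam + 1) - 2) ^ 2 - 4) / 48)
        (Set.Ici 0) ∧
      StrictConcaveOn ℝ (Set.Ici 0)
        (fun lam : ℝ =>
          ((Real.sqrt (24 * j + 1) + Real.sqrt (24 * lam + 1) - 2) ^ 2 - 4) / 48) := by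
  set a : ℝ := Real.sqrt (24 * j + 1) with ha
  have ha5 : 5 ≤ a := by
    have : (5 : ℝ) = Real.sqrt 25 := by
      rw [show (25 : ℝ) = 5 ^ 2 by norm_num, Real.sqrt_sq (by norm_num)]
    rw [this]
    exact Real.sqrt_le_sqrt (by linarith)
  -- rewrite the function
  have key : ∀ lam : ℝ, 0 ≤ lam →
      ((a + Real.sqrt (24 * lam + 1) - 2) ^ 2 - 4) / 48
        = lam / 2 + ((a - 2) / 24) * Real.sqrt (24 * lam + 1)
            + ((a - 2) ^ 2 - 3) / 48 := by
    intro lam hlam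
    have h1 : Real.sqrt (24 * lam + 1) ^ 2 = 24 * lam + 1 :=
      Real.sq_sqrt (by linarith)
    nlinarith [h1]
  have sqrt_lt : ∀ x y : ℝ, 0 ≤ x → x < y →
      Real.sqrt (24 * x + 1) < Real.sqrt (24 * y + 1) := by
    intro x y hx hxy
    exact Real.sqrt_lt_sqrt (by linarith) (by linarith)
  constructor
  · intro x hx y hy hxy
    simp only [Set.mem_Ici] at hx hy
    have hs := sqrt_lt x y hx hxy
    have hc : (0 : ℝ) < (a - 2) / 24 := by linarith
    have := mul_lt_mul_of_pos_left hs hc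
    simp only
    rw [key x hx, key y hy]
    linarith
  · constructor
    · exact convex_Ici 0
    · intro x hx y hy hxy p q hp hq hpq
      simp only [Set.mem_Ici] at hx hy
      simp only [smul_eq_mul]
      rw [key x hx, key y hy, key _ (by positivity)]
      have hxne : (24 * x + 1 : ℝ) ≠ 24 * y + 1 := by
        intro h; apply hxy; linarith
      have hsc := Real.strictConcaveOn_sqrt.2 (show (24 * x + 1 : ℝ) ∈ Set.Ici 0 by
          simp; linarith) (show (24 * y + 1 : ℝ) ∈ Set.Ici 0 by simp; linarith)
          hxne hp hq hpq
      simp only [smul_eq_mul] at hsc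
      have harg : p * (24 * x + 1) + q * (24 * y + 1) = 24 * (p * x + q * y) + 1 := by
        nlinarith [hpq]
      rw [harg] at hsc
      have hc : (0 : ℝ) < (a - 2) / 24 := by linarith
      have := mul_lt_mul_of_pos_left hsc hc
      nlinarith [this]
end
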